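/- arXiv:1205.0610 — 4 statements merged into one kernel-verified Lean document; each statement's English description precedes it below -/
import Mathlib

section
/- Let n ≥ 1 and let v⁺ : Fin n → ℝ and v⁻ : Fin n → ℝ with vᵢ⁺ ∈ (0,1] and vᵢ⁻ ∈ (0,1] for all i, and suppose vᵢ⁺ ≥ vⱼ⁻ for all i, j. Then (∑ᵢ vᵢ⁺)/(∑ᵢ vᵢ⁻) ≤ (∏ᵢ vᵢ⁺)/(∏ᵢ vᵢ⁻). -/
theorem sum_ratio_le_product_ratio
    (n : ℕ) (hn : 1 ≤ n) (vp vm : Fin n → ℝ)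
    (hvp : ∀ i, vp i ∈ Set.Ioc (0:ℝ) 1)
    (hvm : ∀ i, vm i ∈ Set.Ioc (0:ℝ) 1)
    (hdom : ∀ i j, vp i ≥ vm j) :
    (∑ i, vp i) / (∑ i, vm i) ≤ (∏ i, vp i) / (∏ i, vm i) := by
  have hne : (Finset.univ : Finset (Fin n)).Nonempty := by
    simpa [Finset.univ_nonempty_iff] using Fin.pos_iff_nonempty.mp hn
  have hSm : 0 < ∑ i, vm i :=
    Finset.sum_pos (fun i _ => (hvm i).1) hne
  have hPm : 0 < ∏ i, vm i :=
    Finset.prod_pos (fun i _ => (hvm i).1)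
  rw [div_le_div_iff₀ hSm hPm]
  rw [Finset.sum_mul, Finset.mul_sum]
  refine Finset.sum_le_sum (fun i _ => ?_)
  have hi : i ∈ (Finset.univ : Finset (Fin n)) := Finset.mem_univ i
  rw [← Finset.mul_prod_erase _ vm hi, ← Finset.mul_prod_erase _ vp hi]
  have hprod : ∏ j ∈ Finset.univ.erase i, vm j ≤ ∏ j ∈ Finset.univ.erase i, vp j :=
    Finset.prod_le_prod (fun j _ => (hvm j).1.le) (fun j _ => hdom j j)
  have h1 : 0 < vp i * vm i := mul_pos (hvp i).1 (hvm i).1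
  calc vp i * (vm i * ∏ j ∈ Finset.univ.erase i, vm j)
      = (vp i * vm i) * ∏ j ∈ Finset.univ.erase i, vm j := by ring
    _ ≤ (vp i * vm i) * ∏ j ∈ Finset.univ.erase i, vp j :=
        mul_le_mul_of_nonneg_left hprod h1.le
    _ = (vp i * ∏ j ∈ Finset.univ.erase i, vp j) * vm i := by ring
end

section
/- Let n ≥ 1 and let v⁺, v⁻ : Fin n → ℝ with all values in (0,1] and vᵢ⁺ ≥ vⱼ⁻ for all indices i, j. Then ∑ᵢ vᵢ⁺ · ∏ᵢ vᵢ⁻ ≤ ∑ᵢ vᵢ⁻ · ∏ᵢ vᵢ⁺. -/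
theorem sum_mul_prod_le_sum_mul_prod
    (n : ℕ) (hn : 1 ≤ n) (vp vm : Fin n → ℝ)
    (hvp : ∀ i, vp i ∈ Set.Ioc (0:ℝ) 1)
    (hvm : ∀ i, vm i ∈ Set.Ioc (0:ℝ) 1)
    (hdom : ∀ i j, vp i ≥ vm j) :
    (∑ i, vp i) * (∏ i, vm i) ≤ (∑ i, vm i) * (∏ i, vp i) := by
  rw [Finset.sum_mul, Finset.sum_mul]
  apply Finset.sum_le_sum
  intro i _
  rw [← Finset.mul_prod_erase Finset.univ vm (Finset.mem_univ i),
      ← Finset.mul_prod_erase Finset.univ vp (Finset.mem_univ i)]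
  have hprod : (∏ j ∈ Finset.univ.erase i, vm j) ≤ ∏ j ∈ Finset.univ.erase i, vp j :=
    Finset.prod_le_prod (fun j _ => (hvm j).1.le) (fun j _ => hdom j j)
  have hpos : 0 ≤ vp i * vm i := mul_nonneg (hvp i).1.le (hvm i).1.le
  calc vp i * (vm i * ∏ j ∈ Finset.univ.erase i, vm j)
      = (vp i * vm i) * ∏ j ∈ Finset.univ.erase i, vm j := by ring
    _ ≤ (vp i * vm i) * ∏ j ∈ Finset.univ.erase i, vp j :=
        mul_le_mul_of_nonneg_left hprod hpos
    _ = vm i * (vp i * ∏ j ∈ Finset.univ.erase i, vp j) := by ring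
end

section
/- Let n = m ≥ 1, and let Pᵢⱼ, Qᵢⱼ ∈ (0,1] be arrays (i ∈ Fin n, j ranging over finite index sets Jᵢ⁺, Jᵢ⁻ respectively) such that Pᵢⱼ ≥ Q_{i'j'} for all valid indices. Suppose further that for each i, ∑_{j ∈ Jᵢ⁺} Pᵢⱼ ≥ ∑_{j ∈ Jᵢ⁻} Qᵢⱼ, and that all index sets have the same cardinality r. Then (∏ᵢ ∏ⱼ Pᵢⱼ)/(∏ᵢ ∏ⱼ Qᵢⱼ) ≥ (∑ᵢ ∑ⱼ Pᵢⱼ)/(∑ᵢ ∑ⱼ Qᵢⱼ). -/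
lemma prod_sum_ge {ι : Type*} [DecidableEq ι] (s : Finset ι) (p q : ι → ℝ)
    (hq : ∀ k ∈ s, 0 < q k) (hpq : ∀ k ∈ s, q k ≤ p k) :
    (∑ k ∈ s, p k) * (∏ k ∈ s, q k) ≤ (∏ k ∈ s, p k) * (∑ k ∈ s, q k) := by
  induction s using Finset.induction_on with
  | empty => simp
  | @insert a s ha ih =>
    have hqa : 0 < q a := hq a (Finset.mem_insert_self a s)
    have hpa : q a ≤ p a := hpq a (Finset.mem_insert_self a s)
    have hq' : ∀ k ∈ s, 0 < q k := fun k hk => hq k (Finset.mem_insert_of_mem hk)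
    have hpq' : ∀ k ∈ s, q k ≤ p k := fun k hk => hpq k (Finset.mem_insert_of_mem hk)
    have hQpos : 0 < ∏ k ∈ s, q k := Finset.prod_pos hq'
    have hSqpos : 0 ≤ ∑ k ∈ s, q k := Finset.sum_nonneg fun k hk => (hq' k hk).le
    have hSpnn : 0 ≤ ∑ k ∈ s, p k :=
      Finset.sum_nonneg fun k hk => le_trans (hq' k hk).le (hpq' k hk)
    have hPQ : ∏ k ∈ s, q k ≤ ∏ k ∈ s, p k :=
      Finset.prod_le_prod (fun k hk => (hq' k hk).le) hpq'
    rw [Finset.sum_insert ha, Finset.prod_insert ha, Finset.sum_insert ha,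
      Finset.prod_insert ha]
    have h1 : p a * q a * ∏ k ∈ s, q k ≤ p a * q a * ∏ k ∈ s, p k := by
      have : 0 ≤ p a * q a := mul_nonneg (le_trans hqa.le hpa) hqa.le
      exact mul_le_mul_of_nonneg_left hPQ this
    have h2 : q a * ((∑ k ∈ s, p k) * ∏ k ∈ s, q k)
        ≤ p a * ((∏ k ∈ s, p k) * ∑ k ∈ s, q k) := by
      calc q a * ((∑ k ∈ s, p k) * ∏ k ∈ s, q k)
          ≤ p a * ((∑ k ∈ s, p k) * ∏ k ∈ s, q k) :=
            mul_le_mul_of_nonneg_right hpa (mul_nonneg hSpnn hQpos.le)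
        _ ≤ p a * ((∏ k ∈ s, p k) * ∑ k ∈ s, q k) :=
            mul_le_mul_of_nonneg_left (ih hq' hpq') (le_trans hqa.le hpa)
    nlinarith [h1, h2]

theorem double_product_ratio_ge_double_sum_ratio
    (n r : ℕ) (hn : 1 ≤ n) (hr : 1 ≤ r)
    (P Q : Fin n → Fin r → ℝ)
    (hP : ∀ i j, P i j ∈ Set.Ioc (0:ℝ) 1)
    (hQ : ∀ i j, Q i j ∈ Set.Ioc (0:ℝ) 1)
    (hdom : ∀ i j i' j', P i j ≥ Q i' j')
    (hsum : ∀ i, ∑ j, P i j ≥ ∑ j, Q i j) :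
    (∏ i, ∏ j, P i j) / (∏ i, ∏ j, Q i j)
      ≥ (∑ i, ∑ j, P i j) / (∑ i, ∑ j, Q i j) := by
  have hnp : 0 < n := hn
  have hrp : 0 < r := hr
  haveI : NeZero n := ⟨by omega⟩
  haveI : NeZero r := ⟨by omega⟩
  set p : Fin n × Fin r → ℝ := fun x => P x.1 x.2 with hp
  set q : Fin n × Fin r → ℝ := fun x => Q x.1 x.2 with hq'
  have key := prod_sum_ge (Finset.univ : Finset (Fin n × Fin r)) p q
    (fun k _ => (hQ k.1 k.2).1) (fun k _ => hdom k.1 k.2 k.1 k.2)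
  have eP : ∏ i, ∏ j, P i j = ∏ k : Fin n × Fin r, p k := by
    rw [← Finset.prod_product', Finset.univ_product_univ]
  have eQ : ∏ i, ∏ j, Q i j = ∏ k : Fin n × Fin r, q k := by
    rw [← Finset.prod_product', Finset.univ_product_univ]
  have sP : ∑ i, ∑ j, P i j = ∑ k : Fin n × Fin r, p k := by
    rw [← Finset.sum_product', Finset.univ_product_univ]
  have sQ : ∑ i, ∑ j, Q i j = ∑ k : Fin n × Fin r, q k := by
    rw [← Finset.sum_product', Finset.univ_product_univ]
  have hQprod : 0 < ∏ k : Fin n × Fin r, q k :=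
    Finset.prod_pos fun k _ => (hQ k.1 k.2).1
  have hQsum : 0 < ∑ k : Fin n × Fin r, q k :=
    Finset.sum_pos (fun k _ => (hQ k.1 k.2).1) Finset.univ_nonempty
  rw [eP, eQ, sP, sQ, ge_iff_le, div_le_div_iff₀ hQsum hQprod]
  linarith [key]
end

section
/- Let v : Fin (2n) → ℝ be values in (0,1] where the first n values each dominate the last n values. Write S⁺ = ∑_{i<n} vᵢ, S⁻ = ∑_{i≥n} vᵢ, P⁺ = ∏_{i<n} vᵢ, P⁻ = ∏_{i≥n} vᵢ. Then S⁺ ≥ S⁻, P⁺ ≥ P⁻, and S⁺/S⁻ ≤ P⁺/P⁻. -/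
/-!
Pair the `i`-th value of the upper half with the `i`-th value of the lower half, so that
`0 < bᵢ ≤ aᵢ`. The first two claims are then termwise monotonicity. For the ratio, compare
`aᵢ ∏ b = aᵢ bᵢ ∏_{j ≠ i} bⱼ ≤ aᵢ bᵢ ∏_{j ≠ i} aⱼ = bᵢ ∏ a` and sum over `i`, which gives
`(∑ a) ∏ b ≤ (∏ a) ∑ b`.
-/

open Finset

section

variable {ι K : Type*} [Field K] [LinearOrder K] [IsStrictOrderedRing K]

lemma sum_mul_prod_le_prod_mul_sum (s : Finset ι) {a b : ι → K}
    (hb : ∀ i ∈ s, 0 ≤ b i) (hba : ∀ i ∈ s, b i ≤ a i) :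
    (∑ i ∈ s, a i) * ∏ i ∈ s, b i ≤ (∏ i ∈ s, a i) * ∑ i ∈ s, b i := by
  classical
  rw [sum_mul, mul_sum]
  refine sum_le_sum fun i hi => ?_
  rw [← mul_prod_erase s b hi, ← mul_prod_erase s a hi]
  have hrest : ∏ j ∈ s.erase i, b j ≤ ∏ j ∈ s.erase i, a j :=
    prod_le_prod (fun j hj => hb j (mem_of_mem_erase hj)) fun j hj => hba j (mem_of_mem_erase hj)
  have hai : 0 ≤ a i := (hb i hi).trans (hba i hi)
  convert mul_le_mul_of_nonneg_left hrest (mul_nonneg hai (hb i hi)) using 1 <;> ring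

lemma sum_div_sum_le_prod_div_prod (s : Finset ι) {a b : ι → K}
    (hb : ∀ i ∈ s, 0 < b i) (hba : ∀ i ∈ s, b i ≤ a i) :
    (∑ i ∈ s, a i) / ∑ i ∈ s, b i ≤ (∏ i ∈ s, a i) / ∏ i ∈ s, b i := by
  have hprod : 0 < ∏ i ∈ s, b i := prod_pos hb
  have hprod' : 0 ≤ ∏ i ∈ s, a i :=
    prod_nonneg fun i hi => (hb i hi).le.trans (hba i hi)
  rcases (sum_nonneg fun i hi => (hb i hi).le : 0 ≤ ∑ i ∈ s, b i).eq_or_lt with hsum | hsum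
  · rw [← hsum, div_zero]
    exact div_nonneg hprod' hprod.le
  · rw [div_le_div_iff₀ hsum hprod]
    exact sum_mul_prod_le_prod_mul_sum s (fun i hi => (hb i hi).le) hba

end

section

variable {M : Type*} [CommMonoid M] {n : ℕ}

@[to_additive]
lemma prod_filter_val_lt (f : Fin (2 * n) → M) :
    ∏ i ∈ univ.filter (fun i : Fin (2 * n) => (i : ℕ) < n), f i
      = ∏ i : Fin n, f ⟨i, by omega⟩ := by
  exact prod_bij' (fun i hi => ⟨i, (mem_filter.1 hi).2⟩) (fun i _ => ⟨i, by omega⟩)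
    (by simp) (by simp) (by simp) (by simp) (by simp)

@[to_additive]
lemma prod_filter_le_val (f : Fin (2 * n) → M) :
    ∏ i ∈ univ.filter (fun i : Fin (2 * n) => n ≤ (i : ℕ)), f i
      = ∏ i : Fin n, f ⟨i + n, by omega⟩ := by
  have hsplit : ∀ i ∈ univ.filter (fun i : Fin (2 * n) => n ≤ (i : ℕ)),
      (⟨i - n + n, by omega⟩ : Fin (2 * n)) = i :=
    fun i hi => Fin.ext (Nat.sub_add_cancel (mem_filter.1 hi).2)
  exact prod_bij' (fun i _ => ⟨i - n, by omega⟩) (fun i _ => ⟨i + n, by omega⟩)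
    (by simp) (by simp) hsplit (by simp) fun i hi => congrArg f (hsplit i hi).symm

end

theorem split_family_sum_prod_ratios_general
    (n : ℕ) (v : Fin (2 * n) → ℝ)
    (hv : ∀ i, v i ∈ Set.Ioc (0:ℝ) 1)
    (hdom : ∀ i j : Fin (2 * n), (i : ℕ) < n → n ≤ (j : ℕ) → v i ≥ v j) :
    (∑ i ∈ Finset.univ.filter (fun i : Fin (2 * n) => (i : ℕ) < n), v i)
      ≥ (∑ i ∈ Finset.univ.filter (fun i : Fin (2 * n) => n ≤ (i : ℕ)), v i) ∧
    (∏ i ∈ Finset.univ.filter (fun i : Fin (2 * n) => (i : ℕ) < n), v i)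
      ≥ (∏ i ∈ Finset.univ.filter (fun i : Fin (2 * n) => n ≤ (i : ℕ)), v i) ∧
    (∑ i ∈ Finset.univ.filter (fun i : Fin (2 * n) => (i : ℕ) < n), v i)
        / (∑ i ∈ Finset.univ.filter (fun i : Fin (2 * n) => n ≤ (i : ℕ)), v i)
      ≤ (∏ i ∈ Finset.univ.filter (fun i : Fin (2 * n) => (i : ℕ) < n), v i)
        / (∏ i ∈ Finset.univ.filter (fun i : Fin (2 * n) => n ≤ (i : ℕ)), v i) := by
  rw [sum_filter_val_lt, sum_filter_le_val, prod_filter_val_lt, prod_filter_le_val]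
  have hpos : ∀ i ∈ (univ : Finset (Fin n)), 0 < v ⟨i + n, by omega⟩ := fun i _ => (hv _).1
  have hdom' : ∀ i ∈ (univ : Finset (Fin n)), v ⟨i + n, by omega⟩ ≤ v ⟨i, by omega⟩ :=
    fun i _ => hdom _ _ i.isLt (Nat.le_add_left n i)
  exact ⟨sum_le_sum hdom', prod_le_prod (fun i hi => (hpos i hi).le) hdom',
    sum_div_sum_le_prod_div_prod univ hpos hdom'⟩

theorem split_family_sum_prod_ratios
    (n : ℕ) (hn : 1 ≤ n) (v : Fin (2 * n) → ℝ)
    (hv : ∀ i, v i ∈ Set.Ioc (0:ℝ) 1)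
    (hdom : ∀ i j : Fin (2 * n), (i : ℕ) < n → n ≤ (j : ℕ) → v i ≥ v j) :
    (∑ i ∈ Finset.univ.filter (fun i : Fin (2 * n) => (i : ℕ) < n), v i)
      ≥ (∑ i ∈ Finset.univ.filter (fun i : Fin (2 * n) => n ≤ (i : ℕ)), v i) ∧
    (∏ i ∈ Finset.univ.filter (fun i : Fin (2 * n) => (i : ℕ) < n), v i)
      ≥ (∏ i ∈ Finset.univ.filter (fun i : Fin (2 * n) => n ≤ (i : ℕ)), v i) ∧
    (∑ i ∈ Finset.univ.filter (fun i : Fin (2 * n) => (i : ℕ) < n), v i)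
        / (∑ i ∈ Finset.univ.filter (fun i : Fin (2 * n) => n ≤ (i : ℕ)), v i)
      ≤ (∏ i ∈ Finset.univ.filter (fun i : Fin (2 * n) => (i : ℕ) < n), v i)
        / (∏ i ∈ Finset.univ.filter (fun i : Fin (2 * n) => n ≤ (i : ℕ)), v i) :=
  split_family_sum_prod_ratios_general n v hv hdom
end
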